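/- arXiv:2212.10875 — 2 statements merged into one kernel-verified Lean document; each statement's English description precedes it below -/
import Mathlib

section
/- Pastification correctness for the environment-alternation formula simple_Env(U): for every finite trace σ = ⟨σ_0,…,σ_{n−1}⟩ with n ≥ 1 over a set Σ of propositions and every subset U ⊆ Σ, the forward condition [(∃ u ∈ U, u ∈ σ_0) and ∀ j < n, if (∃ u ∈ U, u ∈ σ_j) then ((∀ u, u' ∈ U with u ≠ u', ¬(u ∈ σ_j ∧ u' ∈ σ_j)) and (j = n−1 or ((∀ u ∈ U, u ∉ σ_{j+1}) and (j = n−2 or ∃ u ∈ U, u ∈ σ_{j+2}))))] holds if and only if the past condition [(∃ u ∈ U, u ∈ σ_0) and ∀ i < n, ((∃ u ∈ U, u ∈ σ_i) → ∀ u, u' ∈ U with u ≠ u', ¬(u ∈ σ_i ∧ u' ∈ σ_i)) and ((i > 0 ∧ ∃ u ∈ U, u ∈ σ_{i−1}) → ∀ u ∈ U, u ∉ σ_i) and ((i > 1 ∧ ∃ u ∈ U, u ∈ σ_{i−2}) → ∃ u ∈ U, u ∈ σ_i)] holds. -/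
/-!
Both formulas constrain the same pairs of positions: the future obligations that an active
position `j` places on `j + 1` and `j + 2` are, read from the other end, the past conditions
that position `i` checks against `i - 1` and `i - 2`. The weak-next operators, vacuous at the
end of the trace, become the guards `j + 1 < n` and `j + 2 < n`, which after the shift `i = j + k` are
exactly the lower bounds `0 < i` and `1 < i` of the past side.
-/

theorem forall_shift_iff (n k : ℕ) (A B : ℕ → Prop) :
    (∀ j < n, A j → j + k < n → B (j + k)) ↔ ∀ i < n, k ≤ i ∧ A (i - k) → B i := by
  constructor
  · rintro h i hi ⟨hki, hA⟩
    simpa [Nat.sub_add_cancel hki] using h (i - k) (by omega) hA (by omega)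
  · intro h j _ hA hjk
    exact h (j + k) hjk ⟨by omega, by simpa using hA⟩

theorem eq_sub_one_or_and_eq_sub_two_or_iff {n j : ℕ} (hj : j < n) (P Q : Prop) :
    (j = n - 1 ∨ (P ∧ (j = n - 2 ∨ Q))) ↔ (j + 1 < n → P) ∧ (j + 2 < n → Q) := by
  constructor
  · rintro (hlast | ⟨hP, hlast | hQ⟩)
    · exact ⟨fun _ => by omega, fun _ => by omega⟩
    · exact ⟨fun _ => hP, fun _ => by omega⟩
    · exact ⟨fun _ => hP, fun _ => hQ⟩
  · rintro ⟨hP, hQ⟩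
    by_cases hlast : j = n - 1
    · exact Or.inl hlast
    · refine Or.inr ⟨hP (by omega), ?_⟩
      by_cases hlast' : j = n - 2
      · exact Or.inl hlast'
      · exact Or.inr (hQ (by omega))

theorem alternation_future_iff_past (n : ℕ) (A X N : ℕ → Prop) :
    (∀ j < n, A j → X j ∧ (j = n - 1 ∨ (N (j + 1) ∧ (j = n - 2 ∨ A (j + 2))))) ↔
      ∀ i < n, (A i → X i) ∧ (0 < i ∧ A (i - 1) → N i) ∧ (1 < i ∧ A (i - 2) → A i) := by
  have hfuture : (∀ j < n, A j → X j ∧ (j = n - 1 ∨ (N (j + 1) ∧ (j = n - 2 ∨ A (j + 2))))) ↔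
      (∀ j < n, A j → X j) ∧ (∀ j < n, A j → j + 1 < n → N (j + 1)) ∧
        (∀ j < n, A j → j + 2 < n → A (j + 2)) := by
    simp only [← forall_and]
    refine forall₂_congr fun j hj => ?_
    rw [eq_sub_one_or_and_eq_sub_two_or_iff hj]
  rw [hfuture, forall_shift_iff n 1, forall_shift_iff n 2]
  simp only [← forall_and]
  rfl

theorem simple_env_pastification_general {α : Type*} (n : ℕ)
    (σ : ℕ → Set α) (U : Set α) :
    ((∃ u ∈ U, u ∈ σ 0) ∧
     (∀ j, j < n → ((∃ u ∈ U, u ∈ σ j) →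
       ((∀ u ∈ U, ∀ u' ∈ U, u ≠ u' → ¬ (u ∈ σ j ∧ u' ∈ σ j)) ∧
        (j = n - 1 ∨
          ((∀ u ∈ U, u ∉ σ (j + 1)) ∧
           (j = n - 2 ∨ ∃ u ∈ U, u ∈ σ (j + 2)))))))) ↔
    ((∃ u ∈ U, u ∈ σ 0) ∧
     (∀ i, i < n →
       (((∃ u ∈ U, u ∈ σ i) →
          ∀ u ∈ U, ∀ u' ∈ U, u ≠ u' → ¬ (u ∈ σ i ∧ u' ∈ σ i)) ∧
        ((0 < i ∧ ∃ u ∈ U, u ∈ σ (i - 1)) → ∀ u ∈ U, u ∉ σ i) ∧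
        ((1 < i ∧ ∃ u ∈ U, u ∈ σ (i - 2)) → ∃ u ∈ U, u ∈ σ i)))) :=
  and_congr_right fun _ =>
    alternation_future_iff_past n (fun i => ∃ u ∈ U, u ∈ σ i)
      (fun i => ∀ u ∈ U, ∀ u' ∈ U, u ≠ u' → ¬ (u ∈ σ i ∧ u' ∈ σ i)) (fun i => ∀ u ∈ U, u ∉ σ i)

/-- Pastification correctness for the environment-alternation formula
`simple_Env(U)`: the forward semantics at position 0 iff the semantics of its
pure-past pastification at the last position `n-1`. -/
theorem simple_env_pastification {α : Type*} (n : ℕ) (hn : 1 ≤ n)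
    (σ : ℕ → Set α) (U : Set α) :
    ((∃ u ∈ U, u ∈ σ 0) ∧
     (∀ j, j < n → ((∃ u ∈ U, u ∈ σ j) →
       ((∀ u ∈ U, ∀ u' ∈ U, u ≠ u' → ¬ (u ∈ σ j ∧ u' ∈ σ j)) ∧
        (j = n - 1 ∨
          ((∀ u ∈ U, u ∉ σ (j + 1)) ∧
           (j = n - 2 ∨ ∃ u ∈ U, u ∈ σ (j + 2)))))))) ↔
    ((∃ u ∈ U, u ∈ σ 0) ∧
     (∀ i, i < n →
       (((∃ u ∈ U, u ∈ σ i) →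
          ∀ u ∈ U, ∀ u' ∈ U, u ≠ u' → ¬ (u ∈ σ i ∧ u' ∈ σ i)) ∧
        ((0 < i ∧ ∃ u ∈ U, u ∈ σ (i - 1)) → ∀ u ∈ U, u ∉ σ i) ∧
        ((1 < i ∧ ∃ u ∈ U, u ∈ σ (i - 2)) → ∃ u ∈ U, u ∈ σ i)))) :=
  simple_env_pastification_general n σ U
end

section
/- Pastification correctness for the controller-alternation formula simple_Con(C): for every finite trace σ = ⟨σ_0,…,σ_{n−1}⟩ with n ≥ 1 over a set Σ of propositions and every subset C ⊆ Σ, the forward condition [(∀ c ∈ C, c ∉ σ_0) and ∀ i < n, if (∀ c ∈ C, c ∉ σ_i) then (i = n−1 or ((∃ c ∈ C, c ∈ σ_{i+1}) and (∀ c, c' ∈ C with c ≠ c', ¬(c ∈ σ_{i+1} ∧ c' ∈ σ_{i+1})) and (i = n−2 or ∀ c ∈ C, c ∉ σ_{i+2})))] holds if and only if the past condition [(∀ c ∈ C, c ∉ σ_0) and ∀ i < n, ((i > 0 ∧ ∀ c ∈ C, c ∉ σ_{i−1}) → ((∃ c ∈ C, c ∈ σ_i) and ∀ c, c' ∈ C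 with c ≠ c', ¬(c ∈ σ_i ∧ c' ∈ σ_i))) and ((i > 1 ∧ ∀ c ∈ C, c ∉ σ_{i−2}) → ∀ c ∈ C, c ∉ σ_i)] holds. -/
theorem forall_lt_add_imp_iff_forall_lt_sub_imp {n k : ℕ} {P Q : ℕ → Prop} :
    (∀ i < n, i + k < n → P i → Q (i + k)) ↔ ∀ i < n, k ≤ i ∧ P (i - k) → Q i := by
  constructor
  · rintro h i hi ⟨hki, hP⟩
    simpa [Nat.sub_add_cancel hki] using h (i - k) (by omega) (by omega) hP
  · intro h i _ hik hP
    exact h (i + k) hik ⟨by omega, by simpa using hP⟩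

theorem imp_eq_pred_or_and_iff {n i : ℕ} (hi : i < n) {A B C : Prop} :
    (A → i = n - 1 ∨ (B ∧ (i = n - 2 ∨ C))) ↔ (i + 1 < n → A → B) ∧ (i + 2 < n → A → C) := by
  constructor
  · intro h
    refine ⟨fun hi₁ hA => ?_, fun hi₂ hA => ?_⟩
    · rcases h hA with h | ⟨hB, -⟩
      · omega
      · exact hB
    · rcases h hA with h | ⟨-, h | hC⟩
      · omega
      · omega
      · exact hC
  · rintro ⟨hB, hC⟩ hA
    by_cases hlast : i = n - 1
    · exact .inl hlast
    refine .inr ⟨hB (by omega) hA, ?_⟩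
    by_cases hpen : i = n - 2
    · exact .inl hpen
    · exact .inr (hC (by omega) hA)

/-- The LTLf pattern `G (P → wX (Q ∧ wX P))` on a trace of length `n`, evaluated at `0`, agrees with
its pastification `H ((Y P → Q) ∧ (YY P → P))`, evaluated at `n - 1`. -/
theorem globally_weakNext_iff_historically_yesterday (n : ℕ) (P Q : ℕ → Prop) :
    (∀ i < n, P i → i = n - 1 ∨ (Q (i + 1) ∧ (i = n - 2 ∨ P (i + 2)))) ↔
      ∀ i < n, ((0 < i ∧ P (i - 1)) → Q i) ∧ ((1 < i ∧ P (i - 2)) → P i) :=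
  calc
    _ ↔ ∀ i < n, (i + 1 < n → P i → Q (i + 1)) ∧ (i + 2 < n → P i → P (i + 2)) :=
      forall₂_congr fun _ hi => imp_eq_pred_or_and_iff hi
    _ ↔ (∀ i < n, i + 1 < n → P i → Q (i + 1)) ∧ (∀ i < n, i + 2 < n → P i → P (i + 2)) := by
      simp only [imp_and, forall_and]
    _ ↔ (∀ i < n, 1 ≤ i ∧ P (i - 1) → Q i) ∧ (∀ i < n, 2 ≤ i ∧ P (i - 2) → P i) :=
      and_congr forall_lt_add_imp_iff_forall_lt_sub_imp forall_lt_add_imp_iff_forall_lt_sub_imp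
    _ ↔ _ := by
      simp only [imp_and, forall_and]
      rfl

theorem simple_con_pastification_general {α : Type*} (n : ℕ)
    (σ : ℕ → Set α) (C : Set α) :
    ((∀ c ∈ C, c ∉ σ 0) ∧
     (∀ i, i < n → ((∀ c ∈ C, c ∉ σ i) →
       (i = n - 1 ∨
         ((∃ c ∈ C, c ∈ σ (i + 1)) ∧
          (∀ c ∈ C, ∀ c' ∈ C, c ≠ c' → ¬ (c ∈ σ (i + 1) ∧ c' ∈ σ (i + 1))) ∧
          (i = n - 2 ∨ ∀ c ∈ C, c ∉ σ (i + 2))))))) ↔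
    ((∀ c ∈ C, c ∉ σ 0) ∧
     (∀ i, i < n →
       (((0 < i ∧ ∀ c ∈ C, c ∉ σ (i - 1)) →
          ((∃ c ∈ C, c ∈ σ i) ∧
           ∀ c ∈ C, ∀ c' ∈ C, c ≠ c' → ¬ (c ∈ σ i ∧ c' ∈ σ i))) ∧
        ((1 < i ∧ ∀ c ∈ C, c ∉ σ (i - 2)) → ∀ c ∈ C, c ∉ σ i)))) :=
  and_congr_right' <| by
    simpa only [and_assoc] using globally_weakNext_iff_historically_yesterday n
      (fun i => ∀ c ∈ C, c ∉ σ i)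
      (fun i => (∃ c ∈ C, c ∈ σ i) ∧ ∀ c ∈ C, ∀ c' ∈ C, c ≠ c' → ¬ (c ∈ σ i ∧ c' ∈ σ i))

/-- Pastification correctness for the controller-alternation formula
`simple_Con(C)`: the forward semantics at position 0 iff the semantics of its
pure-past pastification at the last position `n-1`. -/
theorem simple_con_pastification {α : Type*} (n : ℕ) (hn : 1 ≤ n)
    (σ : ℕ → Set α) (C : Set α) :
    ((∀ c ∈ C, c ∉ σ 0) ∧
     (∀ i, i < n → ((∀ c ∈ C, c ∉ σ i) →
       (i = n - 1 ∨
         ((∃ c ∈ C, c ∈ σ (i + 1)) ∧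
          (∀ c ∈ C, ∀ c' ∈ C, c ≠ c' → ¬ (c ∈ σ (i + 1) ∧ c' ∈ σ (i + 1))) ∧
          (i = n - 2 ∨ ∀ c ∈ C, c ∉ σ (i + 2))))))) ↔
    ((∀ c ∈ C, c ∉ σ 0) ∧
     (∀ i, i < n →
       (((0 < i ∧ ∀ c ∈ C, c ∉ σ (i - 1)) →
          ((∃ c ∈ C, c ∈ σ i) ∧
           ∀ c ∈ C, ∀ c' ∈ C, c ≠ c' → ¬ (c ∈ σ i ∧ c' ∈ σ i))) ∧
        ((1 < i ∧ ∀ c ∈ C, c ∉ σ (i - 2)) → ∀ c ∈ C, c ∉ σ i)))) :=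
  simple_con_pastification_general n σ C
end
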